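/- Local Pohozaev identity (Lemma 2.3). Let (u_ε, v_ε) be a nontrivial solution of the singularly perturbed system −ε²Δu + (ε²P(x)+1)u = μ₁u³ + βuv², −ε²Δv + (ε²Q(x)+1)v = μ₂v³ + βvu² on ℝᴺ. Then for any bounded domain Ω ⊂ ℝᴺ (with regular boundary, outward unit normal n = (n₁,…,n_N)) and every j = 1,…,N: ε²∫_Ω (∂_{x_j}P · u_ε² + ∂_{x_j}Q · v_ε²) = −β∫_{∂Ω} v_ε² u_ε² n_j dS − 2ε²∫_{∂Ω} (∂_{x_j}u_ε ∂_n u_ε + ∂_{x_j}v_ε ∂_n v_ε) dS + ε²∫_{∂Ω} (|∇u_ε|² + |∇v_ε|²) n_j dS + ∫_{∂Ω} [(ε²P+1)u_ε² + (ε²Q+1)v_ε²] n_j dS − (1/2)(μ₁∫_{∂Ω} u_ε⁴ n_j dS + μ₂∫_{∂Ω} v_ε⁴ n_j dS). -/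

import Mathlib

open MeasureTheory Real Filter RealInnerProductSpace

noncomputable section

abbrev EucSp (N : ℕ) := EuclideanSpace ℝ (Fin N)

/-- The Laplacian, written as the sum of the pure second directional derivatives. -/
def lap {N : ℕ} (f : EuclideanSpace ℝ (Fin N) → ℝ) (x : EuclideanSpace ℝ (Fin N)) : ℝ :=
  ∑ i : Fin N, fderiv ℝ (fun y => fderiv ℝ f y (EuclideanSpace.single i 1)) x
    (EuclideanSpace.single i 1)

/-- Partial derivative in the `i`-th coordinate direction. -/
def pd {N : ℕ} (f : EuclideanSpace ℝ (Fin N) → ℝ) (i : Fin N)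
    (x : EuclideanSpace ℝ (Fin N)) : ℝ :=
  fderiv ℝ f x (EuclideanSpace.single i 1)

/-- The gradient, as a vector of `EuclideanSpace ℝ (Fin N)`. -/
def grad {N : ℕ} (f : EuclideanSpace ℝ (Fin N) → ℝ) (x : EuclideanSpace ℝ (Fin N)) :
    EuclideanSpace ℝ (Fin N) :=
  (EuclideanSpace.equiv (Fin N) ℝ).symm fun i => pd f i x

/-- The Hessian matrix of second partial derivatives. -/
def hessian {N : ℕ} (f : EuclideanSpace ℝ (Fin N) → ℝ) (x : EuclideanSpace ℝ (Fin N)) :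
    Matrix (Fin N) (Fin N) ℝ :=
  Matrix.of fun i j => fderiv ℝ (fun y => pd f j y) x (EuclideanSpace.single i 1)

/-- The admissible set `M` of coupling constants. -/
def couplingSet (μ1 μ2 : ℝ) : Set ℝ :=
  Set.Ioo (-Real.sqrt (μ1 * μ2)) (min μ1 μ2) ∪ Set.Ioi (max μ1 μ2)

def sigma1 (μ1 μ2 β : ℝ) : ℝ := Real.sqrt ((β - μ2) / (β ^ 2 - μ1 * μ2))
def sigma2 (μ1 μ2 β : ℝ) : ℝ := Real.sqrt ((β - μ1) / (β ^ 2 - μ1 * μ2))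

/-- `w` is the unique positive radial ground state of `-Δw + w = w³` on `ℝᴺ`,
with maximum at the origin, belonging to `H¹` and decaying exponentially. -/
structure IsGroundState (N : ℕ) (w : EuclideanSpace ℝ (Fin N) → ℝ) : Prop where
  smooth : ContDiff ℝ 2 w
  pos : ∀ x, 0 < w x
  eqn : ∀ x, -lap w x + w x = (w x) ^ 3
  radial : ∀ x y : EuclideanSpace ℝ (Fin N), ‖x‖ = ‖y‖ → w x = w y
  maxAt : ∀ x, w x ≤ w 0
  memL2 : MemLp w 2 (volume : Measure (EuclideanSpace ℝ (Fin N)))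
  decay : ∃ C > 0, ∃ c > 0, ∀ x, |w x| + ‖grad w x‖ ≤ C * Real.exp (-c * ‖x‖)

/-- `(U, V)` is the `H¹ × H¹` solution of the linearized system with right hand sides
`-Σᵢ pᵢ xᵢ² w*` and `-Σᵢ qᵢ xᵢ² w⋆`. -/
structure IsCorrector (N : ℕ) (μ1 μ2 β : ℝ) (ws wst : EuclideanSpace ℝ (Fin N) → ℝ)
    (p q : Fin N → ℝ) (U V : EuclideanSpace ℝ (Fin N) → ℝ) : Prop where
  smoothU : ContDiff ℝ 2 U
  smoothV : ContDiff ℝ 2 V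
  memU : MemLp U 2 (volume : Measure (EuclideanSpace ℝ (Fin N)))
  memV : MemLp V 2 (volume : Measure (EuclideanSpace ℝ (Fin N)))
  eqnU : ∀ x, -lap U x + U x - 3 * μ1 * (ws x) ^ 2 * U x - β * (wst x) ^ 2 * U x
      - 2 * β * ws x * wst x * V x = -(∑ i, p i * (x i) ^ 2) * ws x
  eqnV : ∀ x, -lap V x + V x - 3 * μ2 * (wst x) ^ 2 * V x - β * (ws x) ^ 2 * V x
      - 2 * β * ws x * wst x * U x = -(∑ i, q i * (x i) ^ 2) * wst x

/-- Hypotheses (H1)–(H2) on the potentials `P, Q`:  `C²` smoothness, `k` distinct common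
nondegenerate critical points `ξ l` with `P (ξ l) = Q (ξ l) = 0`, quadratic Taylor expansions
with coefficients `p l i`, `q l i`, and the combined nondegeneracy condition. -/
structure HypPQ (N : ℕ) (μ1 μ2 β : ℝ) (P Q : EuclideanSpace ℝ (Fin N) → ℝ)
    (k : ℕ) (ξ : Fin k → EuclideanSpace ℝ (Fin N)) (p q : Fin k → Fin N → ℝ) : Prop where
  smoothP : ContDiff ℝ 2 P
  smoothQ : ContDiff ℝ 2 Q
  distinct : Function.Injective ξ
  critP : ∀ l, fderiv ℝ P (ξ l) = 0
  critQ : ∀ l, fderiv ℝ Q (ξ l) = 0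
  valP : ∀ l, P (ξ l) = 0
  valQ : ∀ l, Q (ξ l) = 0
  nondegP : ∀ l, (hessian P (ξ l)).det ≠ 0
  nondegQ : ∀ l, (hessian Q (ξ l)).det ≠ 0
  nondegPQ : ∀ l, ((β - μ2) • hessian P (ξ l) + (β - μ1) • hessian Q (ξ l)).det ≠ 0
  taylorP : ∀ l, ∃ C > 0, ∃ r > 0, ∀ x, ‖x - ξ l‖ < r →
      |P x - ∑ i, p l i * (x i - ξ l i) ^ 2| ≤ C * ‖x - ξ l‖ ^ 3
  taylorQ : ∀ l, ∃ C > 0, ∃ r > 0, ∀ x, ‖x - ξ l‖ < r →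
      |Q x - ∑ i, q l i * (x i - ξ l i) ^ 2| ≤ C * ‖x - ξ l‖ ^ 3

/-- The weighted `H¹`-inner product `(f, g)_{ε,V} = ∫ ε²∇f·∇g + (ε²V + 1) f g`. -/
def innerE {N : ℕ} (ε : ℝ) (V : EuclideanSpace ℝ (Fin N) → ℝ)
    (f g : EuclideanSpace ℝ (Fin N) → ℝ) : ℝ :=
  ∫ x, (ε ^ 2 * ⟪grad f x, grad g x⟫ + (ε ^ 2 * V x + 1) * f x * g x)

/-- The squared weighted norm `‖(u,v)‖²_H`. -/
def HnormSq {N : ℕ} (ε : ℝ) (P Q : EuclideanSpace ℝ (Fin N) → ℝ)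
    (u v : EuclideanSpace ℝ (Fin N) → ℝ) : ℝ :=
  innerE ε P u u + innerE ε Q v v

/-- `(φ, ψ)` belongs to the orthogonal complement `E_ε` of the span of the pairs of
derivatives of the translated peak profiles. -/
def InEperp {N k : ℕ} (ε : ℝ) (P Q : EuclideanSpace ℝ (Fin N) → ℝ)
    (ξε : Fin k → EuclideanSpace ℝ (Fin N)) (ws wst : EuclideanSpace ℝ (Fin N) → ℝ)
    (φ ψ : EuclideanSpace ℝ (Fin N) → ℝ) : Prop :=
  ∀ l (j : Fin N),
    innerE ε P φ (pd (fun y => ws (ε⁻¹ • (y - ξε l))) j)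
      + innerE ε Q ψ (pd (fun y => wst (ε⁻¹ • (y - ξε l))) j) = 0

/-- `(u, v)` is a solution of the singularly perturbed system. -/
structure PerturbedSol (N : ℕ) (μ1 μ2 β : ℝ) (P Q : EuclideanSpace ℝ (Fin N) → ℝ)
    (ε : ℝ) (u v : EuclideanSpace ℝ (Fin N) → ℝ) : Prop where
  smooth_u : ContDiff ℝ 2 u
  smooth_v : ContDiff ℝ 2 v
  eq_u : ∀ x, -ε ^ 2 * lap u x + (ε ^ 2 * P x + 1) * u x
      = μ1 * (u x) ^ 3 + β * u x * (v x) ^ 2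
  eq_v : ∀ x, -ε ^ 2 * lap v x + (ε ^ 2 * Q x + 1) * v x
      = μ2 * (v x) ^ 3 + β * v x * (u x) ^ 2

/-- The multi-peak ansatz for the singularly perturbed system:
`u = Σ_l (w*((x-ξ_{ε,l})/ε) + ε⁴ W_l*((x-ξ_{ε,l})/ε)) + φ`, and analogously for `v`,
with each peak `ξε l` lying in the `δ`-ball around `ξ l`. -/
structure PeakForm (N k : ℕ) (δ ε : ℝ) (ξ ξε : Fin k → EuclideanSpace ℝ (Fin N))
    (ws wst : EuclideanSpace ℝ (Fin N) → ℝ)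
    (Ws Wst : Fin k → EuclideanSpace ℝ (Fin N) → ℝ)
    (φ ψ u v : EuclideanSpace ℝ (Fin N) → ℝ) : Prop where
  near : ∀ l, ξε l ∈ Metric.ball (ξ l) δ
  u_eq : ∀ x, u x
      = (∑ l, (ws (ε⁻¹ • (x - ξε l)) + ε ^ 4 * Ws l (ε⁻¹ • (x - ξε l)))) + φ x
  v_eq : ∀ x, v x
      = (∑ l, (wst (ε⁻¹ • (x - ξε l)) + ε ^ 4 * Wst l (ε⁻¹ • (x - ξε l)))) + ψ x

/-- `(λ, u, v)` is a normalized solution of the constrained system with mass `ρ²`. -/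
structure NormSol (N : ℕ) (μ1 μ2 β : ℝ) (P Q : EuclideanSpace ℝ (Fin N) → ℝ)
    (ρ lam : ℝ) (u v : EuclideanSpace ℝ (Fin N) → ℝ) : Prop where
  lam_pos : 0 < lam
  smooth_u : ContDiff ℝ 2 u
  smooth_v : ContDiff ℝ 2 v
  mem_u : MemLp u 2 (volume : Measure (EuclideanSpace ℝ (Fin N)))
  mem_v : MemLp v 2 (volume : Measure (EuclideanSpace ℝ (Fin N)))
  eq_u : ∀ x, -lap u x + (P x + lam) * u x = μ1 * (u x) ^ 3 + β * u x * (v x) ^ 2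
  eq_v : ∀ x, -lap v x + (Q x + lam) * v x = μ2 * (v x) ^ 3 + β * v x * (u x) ^ 2
  mass : ∫ x, ((u x) ^ 2 + (v x) ^ 2) = ρ ^ 2

/-- The concentrating form of a normalized multi-peak solution:
`u = √λ (Σ_l (w*(√λ(x-ξ_{ρ,l})) + λ⁻² W_l*(√λ(x-ξ_{ρ,l}))) + φ)`, and analogously for `v`. -/
structure ConcForm (N k : ℕ) (δ lam : ℝ) (ξ ξρ : Fin k → EuclideanSpace ℝ (Fin N))
    (ws wst : EuclideanSpace ℝ (Fin N) → ℝ)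
    (Ws Wst : Fin k → EuclideanSpace ℝ (Fin N) → ℝ)
    (φ ψ u v : EuclideanSpace ℝ (Fin N) → ℝ) : Prop where
  near : ∀ l, ξρ l ∈ Metric.ball (ξ l) δ
  u_eq : ∀ x, u x = Real.sqrt lam *
      ((∑ l, (ws (Real.sqrt lam • (x - ξρ l))
        + (lam ^ 2)⁻¹ * Ws l (Real.sqrt lam • (x - ξρ l)))) + φ x)
  v_eq : ∀ x, v x = Real.sqrt lam *
      ((∑ l, (wst (Real.sqrt lam • (x - ξρ l))
        + (lam ^ 2)⁻¹ * Wst l (Real.sqrt lam • (x - ξρ l)))) + ψ x)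

/-- Nondegeneracy of the linearized operator at `(w*, w⋆)`: every bounded solution of the
linearized limiting system is a linear combination of the translation modes.  (This encodes
the requirement `β ∉ {β_n}`.) -/
def NondegLin (N : ℕ) (μ1 μ2 β : ℝ) (ws wst : EuclideanSpace ℝ (Fin N) → ℝ) : Prop :=
  ∀ η1 η2 : EuclideanSpace ℝ (Fin N) → ℝ, ContDiff ℝ 2 η1 → ContDiff ℝ 2 η2 →
    (∃ C, ∀ x, |η1 x| ≤ C ∧ |η2 x| ≤ C) →
    (∀ x, -lap η1 x + η1 x
        = 3 * μ1 * (ws x) ^ 2 * η1 x + β * ((wst x) ^ 2 * η1 x + 2 * ws x * wst x * η2 x)) →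
    (∀ x, -lap η2 x + η2 x
        = 3 * μ2 * (wst x) ^ 2 * η2 x + β * ((ws x) ^ 2 * η2 x + 2 * ws x * wst x * η1 x)) →
    ∃ a : Fin N → ℝ, (∀ x, η1 x = ∑ j, a j * pd ws j x) ∧ (∀ x, η2 x = ∑ j, a j * pd wst j x)

/-!
Multiplying the first equation by `2 ∂ⱼu` and the second by `2 ∂ⱼv` and adding, every term
except `ε² (∂ⱼP u² + ∂ⱼQ v²)` becomes a divergence: by the product rule and the symmetry of
second derivatives, `2 ∂ⱼu Δu = 2 ∑ᵢ ∂ᵢ(∂ⱼu ∂ᵢu) - ∂ⱼ|∇u|²`, while the potential and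
nonlinear terms are `j`-th partial derivatives of `(ε²P + 1)u²`, `u⁴` and `u²v²`, up to
`ε² ∂ⱼP u²`. Integrating over `Ω` and applying the divergence theorem gives the identity.
-/

section PartialDerivatives

variable {N : ℕ} {f g : EucSp N → ℝ} {x : EucSp N} {i j : Fin N}

@[fun_prop]
theorem continuous_pd (hf : ContDiff ℝ 1 f) (i : Fin N) : Continuous fun x => pd f i x :=
  ((hf.fderiv_right (m := 0) le_rfl).clm_apply contDiff_const).continuous

@[fun_prop]
theorem contDiff_pd (hf : ContDiff ℝ 2 f) (i : Fin N) : ContDiff ℝ 1 fun x => pd f i x :=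
  (hf.fderiv_right le_rfl).clm_apply contDiff_const

theorem pd_const (c : ℝ) : pd (fun _ => c) i x = 0 := by
  simp [pd]

theorem pd_add (hf : DifferentiableAt ℝ f x) (hg : DifferentiableAt ℝ g x) :
    pd (fun y => f y + g y) i x = pd f i x + pd g i x := by
  simp [pd, fderiv_fun_add hf hg]

theorem pd_mul (hf : DifferentiableAt ℝ f x) (hg : DifferentiableAt ℝ g x) :
    pd (fun y => f y * g y) i x = f x * pd g i x + g x * pd f i x := by
  simp [pd, fderiv_fun_mul hf hg]

theorem pd_pow (n : ℕ) (hf : DifferentiableAt ℝ f x) :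
    pd (fun y => f y ^ n) i x = n * f x ^ (n - 1) * pd f i x := by
  simp [pd, fderiv_fun_pow n hf]

theorem pd_sum {ι : Type*} {s : Finset ι} {F : ι → EucSp N → ℝ}
    (hF : ∀ k ∈ s, DifferentiableAt ℝ (F k) x) :
    pd (fun y => ∑ k ∈ s, F k y) i x = ∑ k ∈ s, pd (F k) i x := by
  simp [pd, fderiv_fun_sum hF]

theorem pd_coord_self : pd (fun y : EucSp N => y i) i x = 1 := by
  rw [pd, show (fun y : EucSp N => y i) = EuclideanSpace.proj i from rfl,
    ContinuousLinearMap.fderiv]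
  simp

theorem pd_comm (hf : ContDiff ℝ 2 f) : pd (pd f j) i x = pd (pd f i) j x := by
  have hd : DifferentiableAt ℝ (fderiv ℝ f) x :=
    (hf.fderiv_right (m := 1) le_rfl).differentiable one_ne_zero x
  have hflip (w : EucSp N) :
      fderiv ℝ (fun y => fderiv ℝ f y w) x = (fderiv ℝ (fderiv ℝ f) x).flip w := by
    simp [fderiv_clm_apply hd (differentiableAt_const w)]
  change fderiv ℝ (fun y => fderiv ℝ f y _) x _ = fderiv ℝ (fun y => fderiv ℝ f y _) x _
  simpa [hflip] using hf.contDiffAt.isSymmSndFDerivAt (x := x) (by simp)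
    (EuclideanSpace.single i 1) (EuclideanSpace.single j 1)

theorem lap_eq_sum_pd_pd : lap f x = ∑ i, pd (pd f i) i x := rfl

theorem grad_apply : grad f x i = pd f i x := rfl

theorem inner_grad (y : EucSp N) : ⟪grad f x, y⟫ = ∑ i, pd f i x * y i := by
  simp [PiLp.inner_apply, grad_apply, mul_comm]

theorem norm_grad_sq : ‖grad f x‖ ^ 2 = ∑ i, pd f i x ^ 2 := by
  rw [← real_inner_self_eq_norm_sq, inner_grad]
  simp only [grad_apply, sq]

end PartialDerivatives

theorem Continuous.integrableOn_of_isBounded {X E : Type*} [MetricSpace X] [ProperSpace X]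
    [MeasurableSpace X] [OpensMeasurableSpace X] [NormedAddCommGroup E] {μ : Measure X}
    [IsFiniteMeasureOnCompacts μ] {f : X → E} {s : Set X} (hf : Continuous f)
    (hs : Bornology.IsBounded s) : IntegrableOn f s μ :=
  (hf.continuousOn.integrableOn_compact hs.isCompact_closure).mono_set subset_closure

section Pohozaev

variable {N : ℕ} {u : EucSp N → ℝ}

theorem sum_pd_pd_mul_pd (hu : ContDiff ℝ 2 u) (j : Fin N) (x : EucSp N) :
    ∑ i, pd (fun y => pd u j y * pd u i y) i x
      = pd u j x * lap u x + 1 / 2 * pd (fun y => ∑ i, pd u i y ^ 2) j x := by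
  have hdu (k : Fin N) : Differentiable ℝ fun y => pd u k y :=
    (contDiff_pd hu k).differentiable one_ne_zero
  rw [pd_sum fun k _ => (hdu k x).fun_pow 2, lap_eq_sum_pd_pd, Finset.mul_sum, Finset.mul_sum,
    ← Finset.sum_add_distrib]
  refine Finset.sum_congr rfl fun i _ => ?_
  rw [pd_mul (hdu j x) (hdu i x), pd_pow 2 (hdu i x), pd_comm hu (i := i) (j := j)]
  push_cast
  ring

theorem PerturbedSol.pohozaev_density {μ1 μ2 β ε : ℝ} {P Q v : EucSp N → ℝ}
    (hsol : PerturbedSol N μ1 μ2 β P Q ε u v) (hP : Differentiable ℝ P)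
    (hQ : Differentiable ℝ Q) (j : Fin N) (x : EucSp N) :
    -β * pd (fun y => v y ^ 2 * u y ^ 2) j x
      - 2 * ε ^ 2 * ∑ i, pd (fun y => pd u j y * pd u i y + pd v j y * pd v i y) i x
      + ε ^ 2 * pd (fun y => ∑ i, pd u i y ^ 2 + ∑ i, pd v i y ^ 2) j x
      + pd (fun y => (ε ^ 2 * P y + 1) * u y ^ 2 + (ε ^ 2 * Q y + 1) * v y ^ 2) j x
      - 1 / 2 * (μ1 * pd (fun y => u y ^ 4) j x + μ2 * pd (fun y => v y ^ 4) j x)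
      = ε ^ 2 * (pd P j x * u x ^ 2 + pd Q j x * v x ^ 2) := by
  have hu := hsol.smooth_u
  have hv := hsol.smooth_v
  have hu1 : Differentiable ℝ u := hu.differentiable two_ne_zero
  have hv1 : Differentiable ℝ v := hv.differentiable two_ne_zero
  have hdu (k : Fin N) : Differentiable ℝ fun y => pd u k y :=
    (contDiff_pd hu k).differentiable one_ne_zero
  have hdv (k : Fin N) : Differentiable ℝ fun y => pd v k y :=
    (contDiff_pd hv k).differentiable one_ne_zero
  have hsplit_div : ∑ i, pd (fun y => pd u j y * pd u i y + pd v j y * pd v i y) i x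
      = ∑ i, pd (fun y => pd u j y * pd u i y) i x
        + ∑ i, pd (fun y => pd v j y * pd v i y) i x := by
    rw [← Finset.sum_add_distrib]
    exact Finset.sum_congr rfl fun i _ => pd_add (by fun_prop) (by fun_prop)
  have hsplit_grad : pd (fun y => ∑ i, pd u i y ^ 2 + ∑ i, pd v i y ^ 2) j x
      = pd (fun y => ∑ i, pd u i y ^ 2) j x + pd (fun y => ∑ i, pd v i y ^ 2) j x :=
    pd_add (by fun_prop) (by fun_prop)
  rw [hsplit_div, hsplit_grad, sum_pd_pd_mul_pd hu, sum_pd_pd_mul_pd hv]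
  simp (disch := fun_prop) only [pd_add, pd_mul, pd_pow, pd_const]
  linear_combination (2 * pd u j x) * hsol.eq_u x + (2 * pd v j x) * hsol.eq_v x

end Pohozaev

def HasDivergenceTheorem {N : ℕ} (Ω : Set (EucSp N)) (σb : Measure (EucSp N))
    (nv : EucSp N → EucSp N) : Prop :=
  ∀ f : EucSp N → ℝ, ContDiff ℝ 1 f → ∀ i : Fin N,
    (∫ x in Ω, pd f i x) = ∫ x in frontier Ω, f x * nv x i ∂σb

namespace HasDivergenceTheorem

variable {N : ℕ} {Ω : Set (EucSp N)} {σb : Measure (EucSp N)} {nv : EucSp N → EucSp N}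

/- A flux that is not integrable has the junk integral `0`. The flux of `y ↦ yᵢ` has interior
integral `|Ω| > 0`, so it is integrable; comparing `f` with `f + yᵢ` then gives the claim. -/
theorem integrableOn_frontier_mul (hdiv : HasDivergenceTheorem Ω σb nv) (hΩo : IsOpen Ω)
    (hΩb : Bornology.IsBounded Ω) {f : EucSp N → ℝ} (hf : ContDiff ℝ 1 f) (i : Fin N) :
    IntegrableOn (fun x => f x * nv x i) (frontier Ω) σb := by
  obtain rfl | hne := Ω.eq_empty_or_nonempty
  · simp
  have hvol : 0 < volume.real Ω :=
    ENNReal.toReal_pos (hΩo.measure_pos volume hne).ne' hΩb.measure_lt_top.ne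
  have hzero {g : EucSp N → ℝ} (hg : ContDiff ℝ 1 g)
      (hni : ¬IntegrableOn (fun x => g x * nv x i) (frontier Ω) σb) :
      ∫ x in Ω, pd g i x = 0 :=
    (hdiv g hg i).trans (integral_undef hni)
  have hcoord : ContDiff ℝ 1 fun y : EucSp N => y i :=
    (EuclideanSpace.proj i : EucSp N →L[ℝ] ℝ).contDiff
  have hcoord_int : IntegrableOn (fun x => x i * nv x i) (frontier Ω) σb := by
    by_contra hni
    have h := hzero hcoord hni
    simp only [pd_coord_self, setIntegral_const, smul_eq_mul, mul_one] at h
    exact hvol.ne' h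
  by_contra hni
  have hni' : ¬IntegrableOn (fun x => (f x + x i) * nv x i) (frontier Ω) σb := fun h =>
    hni (by convert h.sub hcoord_int using 1; ext x; simp only [Pi.sub_apply]; ring)
  have h := hzero (hf.add hcoord) hni'
  simp only [pd_add (hf.differentiable one_ne_zero _) (hcoord.differentiable one_ne_zero _),
    pd_coord_self] at h
  rw [integral_add ((continuous_pd hf i).integrableOn_of_isBounded hΩb)
    (continuous_const.integrableOn_of_isBounded hΩb), hzero hf hni, setIntegral_const,
    smul_eq_mul, mul_one, zero_add] at h
  exact hvol.ne' h

theorem integral_frontier_sum_mul (hdiv : HasDivergenceTheorem Ω σb nv) (hΩo : IsOpen Ω)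
    (hΩb : Bornology.IsBounded Ω) {F : Fin N → EucSp N → ℝ} (hF : ∀ i, ContDiff ℝ 1 (F i)) :
    ∫ x in frontier Ω, ∑ i, F i x * nv x i ∂σb = ∫ x in Ω, ∑ i, pd (F i) i x := by
  rw [integral_finsetSum _ fun i _ => hdiv.integrableOn_frontier_mul hΩo hΩb (hF i) i,
    integral_finsetSum _ fun i _ => (continuous_pd (hF i) i).integrableOn_of_isBounded hΩb]
  exact Finset.sum_congr rfl fun i _ => (hdiv _ (hF i) i).symm

end HasDivergenceTheorem

theorem local_pohozaev_identity_general
    (N : ℕ)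
    (μ1 μ2 β : ℝ)
    (P Q : EucSp N → ℝ) (hP : ContDiff ℝ 2 P) (hQ : ContDiff ℝ 2 Q)
    (ε : ℝ)
    (u v : EucSp N → ℝ) (hsol : PerturbedSol N μ1 μ2 β P Q ε u v)
    (Ω : Set (EucSp N)) (hΩo : IsOpen Ω) (hΩb : Bornology.IsBounded Ω)
    (σb : Measure (EucSp N)) (nv : EucSp N → EucSp N)
    -- the divergence theorem on `Ω` (with boundary `∂Ω = frontier Ω`)
    (hdiv : ∀ f : EucSp N → ℝ, ContDiff ℝ 1 f → ∀ i : Fin N,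
      (∫ x in Ω, pd f i x) = ∫ x in frontier Ω, f x * nv x i ∂σb)
    (j : Fin N) :
    ε ^ 2 * ∫ x in Ω, (pd P j x * (u x) ^ 2 + pd Q j x * (v x) ^ 2)
      = -β * (∫ x in frontier Ω, (v x) ^ 2 * (u x) ^ 2 * nv x j ∂σb)
        - 2 * ε ^ 2 * (∫ x in frontier Ω,
            (pd u j x * ⟪grad u x, nv x⟫ + pd v j x * ⟪grad v x, nv x⟫) ∂σb)
        + ε ^ 2 * (∫ x in frontier Ω,
            (‖grad u x‖ ^ 2 * nv x j + ‖grad v x‖ ^ 2 * nv x j) ∂σb)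
        + (∫ x in frontier Ω,
            ((ε ^ 2 * P x + 1) * (u x) ^ 2 * nv x j
              + (ε ^ 2 * Q x + 1) * (v x) ^ 2 * nv x j) ∂σb)
        - (1 / 2) * (μ1 * (∫ x in frontier Ω, (u x) ^ 4 * nv x j ∂σb)
            + μ2 * (∫ x in frontier Ω, (v x) ^ 4 * nv x j ∂σb)) := by
  have hu : ContDiff ℝ 2 u := hsol.smooth_u
  have hv : ContDiff ℝ 2 v := hsol.smooth_v
  have hu1 : ContDiff ℝ 1 u := hu.of_le one_le_two
  have hv1 : ContDiff ℝ 1 v := hv.of_le one_le_two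
  have hP1 : ContDiff ℝ 1 P := hP.of_le one_le_two
  have hQ1 : ContDiff ℝ 1 Q := hQ.of_le one_le_two
  have hflux {f : EucSp N → ℝ} (hf : ContDiff ℝ 1 f) :
      ∫ x in frontier Ω, f x * nv x j ∂σb = ∫ x in Ω, pd f j x :=
    (hdiv f hf j).symm
  have hdir : ∫ x in frontier Ω,
      (pd u j x * ⟪grad u x, nv x⟫ + pd v j x * ⟪grad v x, nv x⟫) ∂σb
      = ∫ x in Ω, ∑ i, pd (fun y => pd u j y * pd u i y + pd v j y * pd v i y) i x := by
    simp only [inner_grad, Finset.mul_sum, ← Finset.sum_add_distrib, ← mul_assoc, ← add_mul]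
    exact HasDivergenceTheorem.integral_frontier_sum_mul hdiv hΩo hΩb fun i => by fun_prop
  have hgrad : ∫ x in frontier Ω, (‖grad u x‖ ^ 2 * nv x j + ‖grad v x‖ ^ 2 * nv x j) ∂σb
      = ∫ x in Ω, pd (fun y => ∑ i, pd u i y ^ 2 + ∑ i, pd v i y ^ 2) j x := by
    simp only [norm_grad_sq, ← add_mul]
    exact hflux (by fun_prop)
  have hpot : ∫ x in frontier Ω,
      ((ε ^ 2 * P x + 1) * u x ^ 2 * nv x j + (ε ^ 2 * Q x + 1) * v x ^ 2 * nv x j) ∂σb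
      = ∫ x in Ω,
          pd (fun y => (ε ^ 2 * P y + 1) * u y ^ 2 + (ε ^ 2 * Q y + 1) * v y ^ 2) j x := by
    simp only [← add_mul]
    exact hflux (by fun_prop)
  rw [hflux (by fun_prop : ContDiff ℝ 1 fun y => v y ^ 2 * u y ^ 2), hdir, hgrad, hpot,
    hflux (by fun_prop : ContDiff ℝ 1 fun y => u y ^ 4),
    hflux (by fun_prop : ContDiff ℝ 1 fun y => v y ^ 4), ← integral_const_mul,
    ← setIntegral_congr_fun hΩo.measurableSet fun x _ => hsol.pohozaev_density
      (hP.differentiable two_ne_zero) (hQ.differentiable two_ne_zero) j x]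
  rw [integral_sub, integral_add, integral_add, integral_sub, integral_const_mul,
    integral_const_mul, integral_const_mul, integral_const_mul, integral_add,
    integral_const_mul, integral_const_mul]
  all_goals exact Continuous.integrableOn_of_isBounded (by fun_prop) hΩb

/-- **Lemma 2.3**: local Pohozaev identity.  Let `(u, v)` be a nontrivial solution of the
singularly perturbed system.  For any bounded (open) domain `Ω ⊂ ℝᴺ`, with surface measure
`σb` on `∂Ω` and outward unit normal field `nv` (for which the divergence theorem holds),
and for every coordinate direction `j`, the stated identity between the interior integral
of `∂_j P u² + ∂_j Q v²` and boundary integrals holds. -/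
theorem local_pohozaev_identity
    (N : ℕ) (hN : N = 2 ∨ N = 3)
    (μ1 μ2 β : ℝ) (hμ1 : 0 < μ1) (hμ2 : 0 < μ2)
    (P Q : EucSp N → ℝ) (hP : ContDiff ℝ 2 P) (hQ : ContDiff ℝ 2 Q)
    (ε : ℝ) (hε : 0 < ε)
    (u v : EucSp N → ℝ) (hsol : PerturbedSol N μ1 μ2 β P Q ε u v)
    (hmemu : MemLp u 2 (volume : Measure (EucSp N)))
    (hmemv : MemLp v 2 (volume : Measure (EucSp N)))
    (hnontriv : ¬(∀ x, u x = 0 ∧ v x = 0))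
    (Ω : Set (EucSp N)) (hΩo : IsOpen Ω) (hΩb : Bornology.IsBounded Ω)
    (σb : Measure (EucSp N)) (nv : EucSp N → EucSp N)
    (hunit : ∀ x ∈ frontier Ω, ‖nv x‖ = 1)
    -- the divergence theorem on `Ω` (with boundary `∂Ω = frontier Ω`)
    (hdiv : ∀ f : EucSp N → ℝ, ContDiff ℝ 1 f → ∀ i : Fin N,
      (∫ x in Ω, pd f i x) = ∫ x in frontier Ω, f x * nv x i ∂σb)
    (j : Fin N) :
    ε ^ 2 * ∫ x in Ω, (pd P j x * (u x) ^ 2 + pd Q j x * (v x) ^ 2)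
      = -β * (∫ x in frontier Ω, (v x) ^ 2 * (u x) ^ 2 * nv x j ∂σb)
        - 2 * ε ^ 2 * (∫ x in frontier Ω,
            (pd u j x * ⟪grad u x, nv x⟫ + pd v j x * ⟪grad v x, nv x⟫) ∂σb)
        + ε ^ 2 * (∫ x in frontier Ω,
            (‖grad u x‖ ^ 2 * nv x j + ‖grad v x‖ ^ 2 * nv x j) ∂σb)
        + (∫ x in frontier Ω,
            ((ε ^ 2 * P x + 1) * (u x) ^ 2 * nv x j
              + (ε ^ 2 * Q x + 1) * (v x) ^ 2 * nv x j) ∂σb)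
        - (1 / 2) * (μ1 * (∫ x in frontier Ω, (u x) ^ 4 * nv x j ∂σb)
            + μ2 * (∫ x in frontier Ω, (v x) ^ 4 * nv x j ∂σb)) :=
  local_pohozaev_identity_general N μ1 μ2 β P Q hP hQ ε u v hsol Ω hΩo hΩb σb nv hdiv j
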